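/- Let ρ be a probability measure on ℝ^d with compact support contained in the ball of radius S, let φ : [0,∞) → (0,∞) be nonincreasing and bounded, and set η = φ(2S). Define the operator M on bounded measurable functions u : supp ρ → ℝ by M[u](x) = Φ(x)u(x) − ∫ (φ(|x−y|) − η) u(y) dρ(y), where Φ(x) = ∫ φ(|x−y|) dρ(y). Then for every bounded u, the sup-norm of M[u] over supp ρ is at least η times the sup-norm of u over supp ρ. -/

import Mathlib

/-!
Fix `x` in the support and write `Φ = Φ(x)`, `K = sup |u|`. Since the support lies in `B_S(0)`,
`φ(|x - y|) ≥ η` for `ρ`-a.e. `y`, so the integral term of `M[u](x)` is at most `(Φ - η) K` in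
absolute value, whence `|M[u](x)| ≥ Φ |u(x)| - (Φ - η) K = η K - Φ (K - |u(x)|)`.
As `Φ ≤ φ(0)`, letting `|u(x)|` approach `K` gives `‖M[u]‖ ≥ η K`.
-/

open MeasureTheory

def measureSupport {α : Type*} [TopologicalSpace α] [MeasurableSpace α]
    (μ : Measure α) : Set α :=
  {x | ∀ U ∈ nhds x, 0 < μ U}

open Set Metric

lemma measureSupport_eq_support {X : Type*} [TopologicalSpace X] [MeasurableSpace X]
    (μ : Measure X) : measureSupport μ = μ.support :=
  ext fun x => (Measure.mem_support_iff_forall x).symm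

lemma le_of_forall_le_add_mul_csSup_sub {α : Type*} {s : Set α} {f : α → ℝ} {a c C : ℝ}
    (hs : s.Nonempty) (hf : BddAbove (f '' s)) (hC : 0 ≤ C)
    (h : ∀ x ∈ s, a ≤ c + C * (sSup (f '' s) - f x)) : a ≤ c := by
  refine le_of_forall_pos_le_add fun ε hε => ?_
  have hδ : 0 < ε / (C + 1) := by positivity
  obtain ⟨_, ⟨x, hx, rfl⟩, hfx⟩ := exists_lt_of_lt_csSup (hs.image f) (sub_lt_self _ hδ)
  have hfx_le : f x ≤ sSup (f '' s) := le_csSup hf (mem_image_of_mem f hx)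
  calc a ≤ c + C * (sSup (f '' s) - f x) := h x hx
    _ ≤ c + (C + 1) * (ε / (C + 1)) := by
        gcongr c + ?_
        exact mul_le_mul (by linarith) (by linarith) (by linarith) (by linarith)
    _ = c + ε := by field_simp

lemma abs_integral_sub_mul_le {α : Type*} [MeasurableSpace α] {μ : Measure α}
    [IsProbabilityMeasure μ] {f g : α → ℝ} {η K : ℝ} (hf : Integrable f μ)
    (hg : AEStronglyMeasurable g μ) (hηf : ∀ᵐ y ∂μ, η ≤ f y) (hgK : ∀ᵐ y ∂μ, |g y| ≤ K) :
    |∫ y, (f y - η) * g y ∂μ| ≤ (∫ y, f y ∂μ - η) * K := by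
  have hfη : Integrable (fun y => f y - η) μ := hf.sub (integrable_const η)
  calc |∫ y, (f y - η) * g y ∂μ| ≤ ∫ y, |(f y - η) * g y| ∂μ := abs_integral_le_integral_abs
    _ ≤ ∫ y, (f y - η) * K ∂μ := by
        refine integral_mono_ae (hfη.mul_bdd hg hgK).abs (hfη.mul_const K) ?_
        filter_upwards [hηf, hgK] with y hy hgy
        rw [abs_mul, abs_of_nonneg (sub_nonneg.2 hy)]
        exact mul_le_mul_of_nonneg_left hgy (sub_nonneg.2 hy)
    _ = (∫ y, f y ∂μ - η) * K := by
        rw [integral_mul_const, integral_sub hf (integrable_const η), integral_const]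
        simp

section PointwiseBounds

variable {Φ P a I η K : ℝ}

lemma sub_mul_sub_abs_le_abs_mul_sub (hΦ : 0 ≤ Φ) (hΦP : Φ ≤ P) (ha : |a| ≤ K)
    (hI : |I| ≤ (Φ - η) * K) : η * K - P * (K - |a|) ≤ |Φ * a - I| := by
  have h := abs_sub_abs_le_abs_sub (Φ * a) I
  rw [abs_mul, abs_of_nonneg hΦ] at h
  nlinarith

lemma abs_mul_sub_le_of_abs_le (hΦ : 0 ≤ Φ) (hΦP : Φ ≤ P) (ha : |a| ≤ K)
    (hI : |I| ≤ (Φ - η) * K) : |Φ * a - I| ≤ P * K + (P - η) * K := by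
  have h := abs_sub (Φ * a) I
  rw [abs_mul, abs_of_nonneg hΦ] at h
  nlinarith [abs_nonneg a]

end PointwiseBounds

section RadialKernel

variable {E : Type*} [NormedAddCommGroup E] {φ : ℝ → ℝ}

lemma le_comp_norm_sub_of_mem_closedBall (hφ : AntitoneOn φ (Ici 0)) {S : ℝ} {x y : E}
    (hx : x ∈ closedBall 0 S) (hy : y ∈ closedBall 0 S) : φ (2 * S) ≤ φ ‖x - y‖ := by
  rw [mem_closedBall_zero_iff] at hx hy
  exact hφ (norm_nonneg _) (by simp only [mem_Ici]; linarith [norm_nonneg x])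
    ((norm_sub_le x y).trans (by linarith))

variable [MeasurableSpace E] [OpensMeasurableSpace E] {μ : Measure E} [IsProbabilityMeasure μ]

lemma integrable_comp_norm_sub (hφmeas : Measurable φ) (hφnn : ∀ r, 0 ≤ r → 0 ≤ φ r)
    (hφ : AntitoneOn φ (Ici 0)) (x : E) : Integrable (fun y => φ ‖x - y‖) μ := by
  have hmeas : Measurable fun y => φ ‖x - y‖ :=
    hφmeas.comp (continuous_const.sub continuous_id).norm.measurable
  refine .of_bound hmeas.aestronglyMeasurable (φ 0) (ae_of_all _ fun y => ?_)
  rw [Real.norm_eq_abs, abs_of_nonneg (hφnn _ (norm_nonneg _))]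
  exact hφ self_mem_Ici (norm_nonneg _) (norm_nonneg _)

lemma integral_comp_norm_sub_le (hφmeas : Measurable φ) (hφnn : ∀ r, 0 ≤ r → 0 ≤ φ r)
    (hφ : AntitoneOn φ (Ici 0)) (x : E) : ∫ y, φ ‖x - y‖ ∂μ ≤ φ 0 :=
  calc ∫ y, φ ‖x - y‖ ∂μ ≤ ∫ _, φ 0 ∂μ :=
        integral_mono (integrable_comp_norm_sub hφmeas hφnn hφ x) (integrable_const _)
          fun _ => hφ self_mem_Ici (norm_nonneg _) (norm_nonneg _)
    _ = φ 0 := by simp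

end RadialKernel

theorem opM_lower_bound_general {d : ℕ} (S : ℝ)
    (ρ : Measure (EuclideanSpace ℝ (Fin d))) [IsProbabilityMeasure ρ]
    (hsupp : measureSupport ρ ⊆ Metric.closedBall 0 S)
    (φ : ℝ → ℝ) (hφpos : ∀ r : ℝ, 0 ≤ r → 0 < φ r)
    (hφmono : AntitoneOn φ (Set.Ici 0)) (hφmeas : Measurable φ)
    (η : ℝ) (hη : η = φ (2 * S))
    (u : EuclideanSpace ℝ (Fin d) → ℝ) (hu : Measurable u)
    (Bu : ℝ) (hubdd : ∀ x ∈ measureSupport ρ, |u x| ≤ Bu) :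
    η * sSup ((fun x => |u x|) '' measureSupport ρ) ≤
      sSup ((fun x =>
        |(∫ y, φ ‖x - y‖ ∂ρ) * u x - ∫ y, (φ ‖x - y‖ - η) * u y ∂ρ|) ''
          measureSupport ρ) := by
  rw [measureSupport_eq_support] at hsupp hubdd ⊢
  set s := ρ.support
  have hs_ae : ∀ᵐ y ∂ρ, y ∈ s := Measure.support_mem_ae
  have hs : s.Nonempty := Measure.nonempty_support (IsProbabilityMeasure.ne_zero ρ)
  have hφnn : ∀ r, 0 ≤ r → 0 ≤ φ r := fun r hr => (hφpos r hr).le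
  set K := sSup ((fun x => |u x|) '' s)
  have hKbdd : BddAbove ((fun x => |u x|) '' s) := ⟨Bu, forall_mem_image.2 hubdd⟩
  have hu_le : ∀ y ∈ s, |u y| ≤ K := fun y hy => le_csSup hKbdd (mem_image_of_mem _ hy)
  have hΦ_nonneg : ∀ x, 0 ≤ ∫ y, φ ‖x - y‖ ∂ρ := fun x =>
    integral_nonneg fun y => hφnn _ (norm_nonneg _)
  have hΦ_le := integral_comp_norm_sub_le (μ := ρ) hφmeas hφnn hφmono
  have hI : ∀ x ∈ s, |∫ y, (φ ‖x - y‖ - η) * u y ∂ρ| ≤ ((∫ y, φ ‖x - y‖ ∂ρ) - η) * K :=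
    fun x hx => abs_integral_sub_mul_le (integrable_comp_norm_sub hφmeas hφnn hφmono x)
      hu.aestronglyMeasurable
      (hs_ae.mono fun y hy => hη ▸ le_comp_norm_sub_of_mem_closedBall hφmono (hsupp hx) (hsupp hy))
      (hs_ae.mono hu_le)
  have hMbdd : BddAbove ((fun x =>
      |(∫ y, φ ‖x - y‖ ∂ρ) * u x - ∫ y, (φ ‖x - y‖ - η) * u y ∂ρ|) '' s) :=
    ⟨_, forall_mem_image.2 fun x hx =>
      abs_mul_sub_le_of_abs_le (hΦ_nonneg x) (hΦ_le x) (hu_le x hx) (hI x hx)⟩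
  refine le_of_forall_le_add_mul_csSup_sub hs hKbdd (hφnn 0 le_rfl) fun x hx => ?_
  linarith [sub_mul_sub_abs_le_abs_mul_sub (hΦ_nonneg x) (hΦ_le x) (hu_le x hx) (hI x hx),
    le_csSup hMbdd (mem_image_of_mem _ hx)]

theorem opM_lower_bound {d : ℕ} (S : ℝ)
    (ρ : Measure (EuclideanSpace ℝ (Fin d))) [IsProbabilityMeasure ρ]
    (hsupp : measureSupport ρ ⊆ Metric.closedBall 0 S)
    (hcompact : IsCompact (measureSupport ρ))
    (φ : ℝ → ℝ) (hφpos : ∀ r : ℝ, 0 ≤ r → 0 < φ r)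
    (hφmono : AntitoneOn φ (Set.Ici 0)) (hφmeas : Measurable φ)
    (B : ℝ) (hφbdd : ∀ r : ℝ, 0 ≤ r → φ r ≤ B)
    (η : ℝ) (hη : η = φ (2 * S))
    (u : EuclideanSpace ℝ (Fin d) → ℝ) (hu : Measurable u)
    (Bu : ℝ) (hubdd : ∀ x ∈ measureSupport ρ, |u x| ≤ Bu) :
    η * sSup ((fun x => |u x|) '' measureSupport ρ) ≤
      sSup ((fun x =>
        |(∫ y, φ ‖x - y‖ ∂ρ) * u x - ∫ y, (φ ‖x - y‖ - η) * u y ∂ρ|) ''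
          measureSupport ρ) :=
  opM_lower_bound_general S ρ hsupp φ hφpos hφmono hφmeas η hη u hu Bu hubdd
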